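/- arXiv:2402.17616 — 2 statements merged into one kernel-verified Lean document; each statement's English description precedes it below -/
import Mathlib

section
/- Let D be an m×n matrix with nonnegative integer entries such that every column of D is nonzero. Suppose there exist a nonnegative integer n×n matrix C and indices i₁,…,iₙ ∈ {1,…,m} such that the n×n matrix whose (r,s)-entry is (DC)_{i_r, s} is lower unitriangular (1's on the diagonal, 0's above the diagonal). Then there is a permutation σ of the columns of D such that the n×n submatrix of D with rows i₁,…,iₙ and columns σ(1),…,σ(n) is lower unitriangular. -/
open Finset

def Matrix.IsLowerUnitriangular {ι R : Type*} [LT ι] [Zero R] [One R] (M : Matrix ι ι R) :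
    Prop :=
  ∀ r s, (r = s → M r s = 1) ∧ (r < s → M r s = 0)

theorem Nat.exists_eq_one_and_eq_one_of_sum_mul_eq_one {K : Type*} [Fintype K] {a b : K → ℕ}
    (h : ∑ k, a k * b k = 1) : ∃ k, a k = 1 ∧ b k = 1 := by
  obtain ⟨k, -, hk⟩ := exists_ne_zero_of_sum_ne_zero (h ▸ one_ne_zero : ∑ k, a k * b k ≠ 0)
  have hle : a k * b k ≤ 1 :=
    h ▸ single_le_sum (f := fun k => a k * b k) (fun _ _ => Nat.zero_le _) (mem_univ k)
  exact ⟨k, mul_eq_one.mp (by omega)⟩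

/-- For each row `r`, the unique nonzero term `A r k * C k r` of `(A * C) r r = 1` picks the
column `f r`; a zero entry `(A * C) r s` with `r < s` kills `A r (f s)` because `C (f s) s = 1`. -/
theorem Matrix.exists_injective_isLowerUnitriangular_submatrix_of_mul {ι K : Type*}
    [LinearOrder ι] [Fintype K] (A : Matrix ι K ℕ) (C : Matrix K ι ℕ)
    (h : (A * C).IsLowerUnitriangular) :
    ∃ f : ι → K, Function.Injective f ∧ (A.submatrix id f).IsLowerUnitriangular := by
  choose f hAf hCf using fun r =>
    Nat.exists_eq_one_and_eq_one_of_sum_mul_eq_one ((h r r).1 rfl)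
  have above : ∀ r s, r < s → A r (f s) = 0 := fun r s hrs => by
    have hzero := sum_eq_zero_iff.mp ((h r s).2 hrs) (f s) (mem_univ _)
    simpa [hCf s] using hzero
  refine ⟨f, fun r s hrs => ?_, fun r s => ⟨fun hrs => hrs ▸ hAf r, above r s⟩⟩
  by_contra hne
  rcases Ne.lt_or_gt hne with hlt | hlt
  · simpa [← hrs, hAf r] using above r s hlt
  · simpa [hrs, hAf s] using above s r hlt

theorem stmt_1_general (m n : ℕ) (D : Matrix (Fin m) (Fin n) ℕ)
    (C : Matrix (Fin n) (Fin n) ℕ) (idx : Fin n → Fin m)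
    (htri : ∀ r s : Fin n,
      (r = s → (D * C) (idx r) s = 1) ∧ (r < s → (D * C) (idx r) s = 0)) :
    ∃ σ : Equiv.Perm (Fin n), ∀ r s : Fin n,
      (r = s → D (idx r) (σ s) = 1) ∧ (r < s → D (idx r) (σ s) = 0) := by
  obtain ⟨f, hf, htri_f⟩ :=
    (D.submatrix idx id).exists_injective_isLowerUnitriangular_submatrix_of_mul C htri
  exact ⟨Equiv.ofBijective f (Finite.injective_iff_bijective.mp hf), htri_f⟩

/-- **Geck's criterion, abstract form.**
Let `D` be an `m × n` matrix with nonnegative integer entries whose columns are all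
nonzero.  If there are a nonnegative integer `n × n` matrix `C` and row indices
`idx : Fin n → Fin m` such that the matrix `(r, s) ↦ (D * C) (idx r) s` is lower
unitriangular, then some permutation `σ` of the columns makes the submatrix of `D`
with rows `idx` and columns `σ` lower unitriangular. -/
theorem stmt_1 (m n : ℕ) (D : Matrix (Fin m) (Fin n) ℕ)
    (hcol : ∀ s : Fin n, ∃ r : Fin m, D r s ≠ 0)
    (C : Matrix (Fin n) (Fin n) ℕ) (idx : Fin n → Fin m)
    (htri : ∀ r s : Fin n,
      (r = s → (D * C) (idx r) s = 1) ∧ (r < s → (D * C) (idx r) s = 0)) :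
    ∃ σ : Equiv.Perm (Fin n), ∀ r s : Fin n,
      (r = s → D (idx r) (σ s) = 1) ∧ (r < s → D (idx r) (σ s) = 0) :=
  stmt_1_general m n D C idx htri
end

section
/- Let G be a finite group, T ≤ H ≤ G subgroups with T ≤ H, and s an element of T such that H = C_G(s). Set W = N_G(T)/T, W^H = N_H(T)/T, M = {m ∈ G : m⁻¹ s m ∈ T}, and Γ = H\M/T (double cosets). Assume that any two G-conjugates of T that are both contained in H are conjugate by an element of H. Then the map W^H w ↦ H ẇ T (where ẇ ∈ N_G(T) is any representative of w) is a well-defined bijection from the coset space W^H\W onto Γ. -/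
/-!
If `m⁻¹ s m ∈ T` and `T` is abelian, then `m T m⁻¹` centralizes `s`, i.e. lies in `H`; the
conjugacy hypothesis gives `h ∈ H` with `h m T m⁻¹ h⁻¹ = T`, so `H m T` contains `h m ∈ N_G(T)`.
Conversely, if `n' = h n t` with `n, n' ∈ N_G(T)`, then `n' n⁻¹ = h (n t n⁻¹)` lies in
`H ∩ N_G(T)` because `n t n⁻¹ ∈ T ≤ H`.
-/

namespace Subgroup

variable {G : Type*} [Group G]

lemma map_conj_le_centralizer_of_conj_mem {T : Subgroup G}
    (hTab : ∀ x ∈ T, ∀ y ∈ T, x * y = y * x) {s m : G} (hm : m⁻¹ * s * m ∈ T) :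
    T.map (MulAut.conj m).toMonoidHom ≤ centralizer {s} := by
  rintro _ ⟨x, hx, rfl⟩
  rw [mem_centralizer_singleton_iff]
  have hs : s = MulAut.conj m (m⁻¹ * s * m) := by simp [mul_assoc]
  rw [hs]
  exact (Commute.map (show Commute x _ from hTab x hx _ hm) (MulAut.conj m)).eq

lemma map_conj_one (T : Subgroup G) : T.map (MulAut.conj (1 : G)).toMonoidHom = T := by
  ext x
  simp

lemma exists_mul_mem_normalizer_of_map_conj_le {T H : Subgroup G} (hTH : T ≤ H)
    (hconj : ∀ g₁ g₂ : G,
      T.map (MulAut.conj g₁).toMonoidHom ≤ H → T.map (MulAut.conj g₂).toMonoidHom ≤ H →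
      ∃ h ∈ H, T.map (MulAut.conj (h * g₁)).toMonoidHom = T.map (MulAut.conj g₂).toMonoidHom)
    {m : G} (hm : T.map (MulAut.conj m).toMonoidHom ≤ H) :
    ∃ h ∈ H, h * m ∈ normalizer (T : Set G) := by
  obtain ⟨h, hh, heq⟩ := hconj m 1 hm ((map_conj_one T).trans_le hTH)
  exact ⟨h, hh, mem_normalizer_iff_map_conj_eq.mpr (heq.trans (map_conj_one T))⟩

lemma mul_inv_mem_inf_normalizer {T H : Subgroup G} (hTH : T ≤ H) {n h t : G}
    (hn : n ∈ normalizer (T : Set G)) (hh : h ∈ H) (ht : t ∈ T)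
    (hn' : h * n * t ∈ normalizer (T : Set G)) :
    h * n * t * n⁻¹ ∈ H ⊓ normalizer (T : Set G) := by
  refine mem_inf.mpr ⟨?_, mul_mem hn' (inv_mem hn)⟩
  have hnt : n * t * n⁻¹ ∈ H := hTH ((mem_normalizer_iff.mp hn t).mp ht)
  simpa only [mul_assoc] using mul_mem hh hnt

end Subgroup

open Subgroup in
theorem stmt_14_general (G : Type) [Group G] (T H : Subgroup G)
    (hTH : T ≤ H)
    (hTab : ∀ x ∈ T, ∀ y ∈ T, x * y = y * x)
    (s : G) (hH : H = Subgroup.centralizer ({s} : Set G))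
    (hconj : ∀ g₁ g₂ : G,
      Subgroup.map (MulAut.conj g₁).toMonoidHom T ≤ H →
      Subgroup.map (MulAut.conj g₂).toMonoidHom T ≤ H →
      ∃ h ∈ H, Subgroup.map (MulAut.conj (h * g₁)).toMonoidHom T =
        Subgroup.map (MulAut.conj g₂).toMonoidHom T) :
    -- well-defined: equal cosets in `W^H \ W` map to the same double coset
    (∀ n n' : G, n ∈ Subgroup.normalizer (T : Set G) → n' ∈ Subgroup.normalizer (T : Set G) →
      (∃ h ∈ H ⊓ Subgroup.normalizer (T : Set G), n' = h * n) →
      ∃ h ∈ H, ∃ t ∈ T, n' = h * n * t) ∧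
    -- injective
    (∀ n n' : G, n ∈ Subgroup.normalizer (T : Set G) → n' ∈ Subgroup.normalizer (T : Set G) →
      (∃ h ∈ H, ∃ t ∈ T, n' = h * n * t) →
      ∃ h ∈ H ⊓ Subgroup.normalizer (T : Set G), n' = h * n) ∧
    -- surjective
    (∀ m : G, m⁻¹ * s * m ∈ T →
      ∃ n ∈ Subgroup.normalizer (T : Set G), ∃ h ∈ H, ∃ t ∈ T, m = h * n * t) := by
  refine ⟨?_, ?_, ?_⟩
  · rintro n _ _ _ ⟨h, hh, rfl⟩
    exact ⟨h, hh.1, 1, one_mem T, (mul_one _).symm⟩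
  · rintro n _ hn hn' ⟨h, hh, t, ht, rfl⟩
    exact ⟨_, mul_inv_mem_inf_normalizer hTH hn hh ht hn', by group⟩
  · intro m hm
    have hmH : T.map (MulAut.conj m).toMonoidHom ≤ H :=
      hH ▸ map_conj_le_centralizer_of_conj_mem hTab hm
    obtain ⟨h, hh, hhm⟩ := exists_mul_mem_normalizer_of_map_conj_le hTH hconj hmH
    exact ⟨h * m, hhm, h⁻¹, inv_mem hh, 1, one_mem T, by group⟩

/-- Let `G` be a finite group, `T ≤ H ≤ G` with `T` abelian (a "torus"),
`s ∈ T` and `H = C_G(s)`.  Set `W = N_G(T)/T`, `W^H = N_H(T)/T`,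
`M = {m ∈ G : m⁻¹ s m ∈ T}` and `Γ = H\M/T`.  Assume any two `G`-conjugates of
`T` contained in `H` are `H`-conjugate.  Then the map `W^H w ↦ H ẇ T` is a
well-defined bijection from `W^H \ W` onto `Γ`; unpacked, on representatives
`n ∈ N_G(T)` it respects the equivalence relations in both directions and every
class of `Γ` contains an element of `N_G(T)`. -/
theorem stmt_14 (G : Type) [Group G] [Finite G] (T H : Subgroup G)
    (hTH : T ≤ H)
    (hTab : ∀ x ∈ T, ∀ y ∈ T, x * y = y * x)
    (s : G) (hsT : s ∈ T) (hH : H = Subgroup.centralizer ({s} : Set G))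
    (hconj : ∀ g₁ g₂ : G,
      Subgroup.map (MulAut.conj g₁).toMonoidHom T ≤ H →
      Subgroup.map (MulAut.conj g₂).toMonoidHom T ≤ H →
      ∃ h ∈ H, Subgroup.map (MulAut.conj (h * g₁)).toMonoidHom T =
        Subgroup.map (MulAut.conj g₂).toMonoidHom T) :
    -- well-defined: equal cosets in `W^H \ W` map to the same double coset
    (∀ n n' : G, n ∈ Subgroup.normalizer (T : Set G) → n' ∈ Subgroup.normalizer (T : Set G) →
      (∃ h ∈ H ⊓ Subgroup.normalizer (T : Set G), n' = h * n) →
      ∃ h ∈ H, ∃ t ∈ T, n' = h * n * t) ∧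
    -- injective
    (∀ n n' : G, n ∈ Subgroup.normalizer (T : Set G) → n' ∈ Subgroup.normalizer (T : Set G) →
      (∃ h ∈ H, ∃ t ∈ T, n' = h * n * t) →
      ∃ h ∈ H ⊓ Subgroup.normalizer (T : Set G), n' = h * n) ∧
    -- surjective
    (∀ m : G, m⁻¹ * s * m ∈ T →
      ∃ n ∈ Subgroup.normalizer (T : Set G), ∃ h ∈ H, ∃ t ∈ T, m = h * n * t) :=
  stmt_14_general G T H hTH hTab s hH hconj
end
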